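/- (Lévy's generalized Borel–Cantelli lemma.) Let (ℱ_n)_{n∈ℕ} be a filtration on a finite measure space (Ω, 𝒜, μ), and let (S_n)_{n∈ℕ} be a sequence of sets with S_n ∈ ℱ_n for all n. Then for μ-a.e. ω: ω ∈ limsup_{n→∞} S_n if and only if the partial sums Σ_{k<n} μ[1_{S_{k+1}} | ℱ_k](ω) tend to infinity as n → ∞. -/
import Mathlib


open MeasureTheory Filter Topology
open scoped ENNReal NNReal

/-- **Lévy's generalized Borel–Cantelli lemma**: given a sequence of sets `S n` with
`S n ∈ ℱ n`, almost every `ω` belongs to `limsup S n` iff the partial sums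
`∑_{k < n} μ[1_{S (k+1)} | ℱ k] ω` tend to infinity. -/
theorem levy_generalized_borel_cantelli
    {Ω : Type*} {𝒜 : MeasurableSpace Ω} {μ : Measure Ω} [IsFiniteMeasure μ]
    {ℱ : Filtration ℕ 𝒜} {s : ℕ → Set Ω}
    (hs : ∀ n, MeasurableSet[ℱ n] (s n)) :
    ∀ᵐ ω ∂μ, ω ∈ limsup s atTop ↔
      Tendsto (fun n => ∑ k ∈ Finset.range n,
        (μ[(s (k + 1)).indicator (1 : Ω → ℝ)|ℱ k]) ω) atTop atTop := by
  exact MeasureTheory.ae_mem_limsup_atTop_iff μ hs
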